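/- arXiv:2308.09382 — 4 statements merged into one kernel-verified Lean document; each statement's English description precedes it below -/
import Mathlib

section
/- For every positive integer t, the Lagrangian of K_{3(t+1)}^{3-} is an irrational number. -/
open Finset

/-- The Lagrangian polynomial of a hypergraph `H` on vertex set `V`. -/
def lagPoly {V : Type*} [DecidableEq V] (H : Finset (Finset V)) (x : V → ℝ) : ℝ :=
  ∑ E ∈ H, ∏ i ∈ E, x i

/-- The set of values of the Lagrangian polynomial over the standard simplex;
the Lagrangian of `H` is the greatest element of this set. -/
def lagValues {V : Type*} [Fintype V] [DecidableEq V] (H : Finset (Finset V)) : Set ℝ :=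
  lagPoly H '' stdSimplex ℝ V

/-- `K_{3(t+1)}^{3-}`: the complete 3-graph on `3t+3` vertices minus the single edge
consisting of the last three vertices. -/
def Kminus (t : ℕ) : Finset (Finset (Fin (3 * t + 3))) :=
  (Finset.univ.powersetCard 3).erase (Finset.univ.filter (fun i => 3 * t ≤ i.val))

/-!
At a maximiser `x`, average two coordinates `i`, `j` on the same side of the missing edge `R`.
The transposition `(i j)` is an automorphism of the hypergraph, so the averaged weighting stays in
the simplex and gains `(x i - x j)² / 4` times the weight of the link of `{i, j}`; that link weight
is positive as soon as the Lagrangian is. Hence `x` takes one value `a` off `R` and one value `b` on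
`R`, and the Lagrangian is the maximum of a cubic in `s = n a` on `[0, 1]`, where `n = 3t`.
The maximum sits at a root of a quadratic of discriminant `(n + 3)² - 12 = 9t² + 18t - 3`,
which is `≡ 6 (mod 9)` and hence not a square; the value is `q₁ + q₂ √(9t² + 18t - 3)` with
rational `q₁` and `q₂ ≠ 0`.
-/

section Symmetrization

variable {V : Type*} [DecidableEq V]

theorem lagPoly_comp_perm {H : Finset (Finset V)} {σ : Equiv.Perm V}
    (hH : ∀ E ∈ H, E.map σ.toEmbedding ∈ H) (x : V → ℝ) :
    lagPoly H (x ∘ σ) = lagPoly H x := by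
  have hmap : H.map σ.finsetCongr.toEmbedding = H :=
    map_eq_of_subset fun F hF => by
      obtain ⟨E, hE, rfl⟩ := mem_map.1 hF
      exact hH E hE
  conv_rhs => rw [lagPoly, ← hmap, sum_map]
  simp [lagPoly, Equiv.finsetCongr_apply, prod_map]

theorem prod_eq_prod_erase_erase_mul {i j : V} (hij : i ≠ j) {x z : V → ℝ}
    (hz : ∀ k, k ≠ i → k ≠ j → z k = x k) (E : Finset V) :
    ∏ k ∈ E, z k = (∏ k ∈ (E.erase i).erase j, x k) *
      (if i ∈ E then z i else 1) * (if j ∈ E then z j else 1) := by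
  have prod_eq_ite_mul {s : Finset V} (a : V) :
      ∏ k ∈ s, z k = (if a ∈ s then z a else 1) * ∏ k ∈ s.erase a, z k := by
    split_ifs with ha
    · exact (mul_prod_erase s z ha).symm
    · rw [one_mul, erase_eq_of_notMem ha]
  have hrest : ∏ k ∈ (E.erase i).erase j, z k = ∏ k ∈ (E.erase i).erase j, x k :=
    prod_congr rfl fun k hk => hz k (ne_of_mem_erase (mem_of_mem_erase hk)) (ne_of_mem_erase hk)
  rw [prod_eq_ite_mul i, prod_eq_ite_mul (s := E.erase i) j, hrest]
  simp only [mem_erase, ne_eq, hij.symm, not_false_eq_true, true_and]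
  ring

theorem prod_midpoint_swap {i j : V} (hij : i ≠ j) (x : V → ℝ) (E : Finset V) :
    2 * ∏ k ∈ E, (x k + x (Equiv.swap i j k)) / 2 =
      ∏ k ∈ E, x k + ∏ k ∈ E, x (Equiv.swap i j k) +
        if i ∈ E ∧ j ∈ E then (x i - x j) ^ 2 / 2 * ∏ k ∈ (E.erase i).erase j, x k
        else 0 := by
  have off_ij {k} (hki : k ≠ i) (hkj : k ≠ j) : Equiv.swap i j k = k :=
    Equiv.swap_apply_of_ne_of_ne hki hkj
  rw [prod_eq_prod_erase_erase_mul hij (x := x) (z := fun k => (x k + x (Equiv.swap i j k)) / 2)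
      (fun k hki hkj => by simp [off_ij hki hkj]) E,
    prod_eq_prod_erase_erase_mul hij (x := x) (z := fun k => x (Equiv.swap i j k))
      (fun k hki hkj => by simp [off_ij hki hkj]) E,
    prod_eq_prod_erase_erase_mul hij (z := x) (fun _ _ _ => rfl) E]
  by_cases hi : i ∈ E <;> by_cases hj : j ∈ E <;>
    simp [hi, hj, Equiv.swap_apply_left, Equiv.swap_apply_right] <;> ring

theorem two_mul_lagPoly_midpoint_swap {i j : V} (hij : i ≠ j) (H : Finset (Finset V))
    (x : V → ℝ) :
    2 * lagPoly H (fun k => (x k + x (Equiv.swap i j k)) / 2) =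
      lagPoly H x + lagPoly H (x ∘ Equiv.swap i j) +
        (x i - x j) ^ 2 / 2 *
          ∑ E ∈ H with i ∈ E ∧ j ∈ E, ∏ k ∈ (E.erase i).erase j, x k := by
  simp only [lagPoly, mul_sum, prod_midpoint_swap hij, sum_add_distrib, sum_ite, sum_const_zero,
    add_zero, Function.comp_apply]

theorem exists_forall_pos_of_lagPoly_pos {H : Finset (Finset V)} {x : V → ℝ}
    (hx : ∀ k, 0 ≤ x k) (h : 0 < lagPoly H x) : ∃ E ∈ H, ∀ k ∈ E, 0 < x k := by
  by_contra! hne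
  refine h.ne' (sum_eq_zero fun E hE => ?_)
  obtain ⟨k, hk, hxk⟩ := hne E hE
  exact prod_eq_zero hk (le_antisymm hxk (hx k))

theorem apply_eq_apply_of_isMaxOn_of_swap [Fintype V] {H : Finset (Finset V)} {x : V → ℝ}
    (hx : x ∈ stdSimplex ℝ V) (hmax : IsMaxOn (lagPoly H) (stdSimplex ℝ V) x) {i j : V}
    (hH : ∀ E ∈ H, E.map (Equiv.swap i j).toEmbedding ∈ H) {E : Finset V} (hE : E ∈ H)
    (hiE : i ∈ E) (hjE : j ∈ E) (hpos : ∀ k ∈ E, k ≠ i → k ≠ j → 0 < x k) :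
    x i = x j := by
  rcases eq_or_ne i j with rfl | hij
  · rfl
  set y : V → ℝ := fun k => (x k + x (Equiv.swap i j k)) / 2
  have hswap : x ∘ Equiv.swap i j ∈ stdSimplex ℝ V :=
    ⟨fun k => hx.1 _, by rw [← hx.2]; exact Equiv.sum_comp (Equiv.swap i j) x⟩
  have hy : y ∈ stdSimplex ℝ V := by
    convert convex_stdSimplex ℝ V hx hswap (by norm_num : (0 : ℝ) ≤ 1 / 2)
      (by norm_num : (0 : ℝ) ≤ 1 / 2) (by norm_num) using 1
    ext k
    simp only [y, Pi.add_apply, Pi.smul_apply, smul_eq_mul, Function.comp_apply]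
    ring
  have hlink : 0 < ∑ E ∈ H with i ∈ E ∧ j ∈ E, ∏ k ∈ (E.erase i).erase j, x k :=
    sum_pos' (fun F _ => prod_nonneg fun k _ => hx.1 k)
      ⟨E, mem_filter.2 ⟨hE, hiE, hjE⟩, prod_pos fun k hk =>
        hpos k (mem_of_mem_erase (mem_of_mem_erase hk)) (ne_of_mem_erase (mem_of_mem_erase hk))
          (ne_of_mem_erase hk)⟩
  have hmid := two_mul_lagPoly_midpoint_swap hij H x
  rw [lagPoly_comp_perm hH] at hmid
  have hle : lagPoly H y ≤ lagPoly H x := hmax hy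
  have hsq : (x i - x j) ^ 2 = 0 := by
    nlinarith [sq_nonneg (x i - x j), mul_nonneg (sq_nonneg (x i - x j)) hlink.le]
  exact sub_eq_zero.1 (pow_eq_zero_iff two_ne_zero |>.1 hsq)

end Symmetrization

section ElementarySymmetric

variable {V : Type*}

theorem sum_powersetCard_prod_of_eqOn {s : Finset V} {x : V → ℝ} {a : ℝ}
    (hx : ∀ i ∈ s, x i = a) (k : ℕ) :
    ∑ E ∈ s.powersetCard k, ∏ i ∈ E, x i = (#s).choose k * a ^ k := by
  rw [sum_congr rfl fun E hE => ?_, sum_const, card_powersetCard, nsmul_eq_mul]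
  rw [prod_congr rfl fun i hi => hx i ((mem_powersetCard.1 hE).1 hi), prod_const,
    (mem_powersetCard.1 hE).2]

variable [DecidableEq V]

theorem sum_powersetCard_succ_insert {s : Finset V} {v : V} (hv : v ∉ s) (k : ℕ)
    (x : V → ℝ) :
    ∑ E ∈ (insert v s).powersetCard (k + 1), ∏ i ∈ E, x i =
      ∑ E ∈ s.powersetCard (k + 1), ∏ i ∈ E, x i +
        x v * ∑ E ∈ s.powersetCard k, ∏ i ∈ E, x i := by
  have hvE {E} (hE : E ∈ s.powersetCard k) : v ∉ E := fun h => hv ((mem_powersetCard.1 hE).1 h)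
  rw [powersetCard_succ_insert hv, sum_union (disjoint_left.2 fun E hE hE' => ?_),
    sum_image fun E hE F hF h => ?_, mul_sum]
  · exact add_right_inj _ |>.2 <| sum_congr rfl fun E hE => prod_insert (hvE hE)
  · rw [← erase_insert (hvE hE), ← erase_insert (hvE hF), h]
  · obtain ⟨F, hF, rfl⟩ := mem_image.1 hE'
    exact hv ((mem_powersetCard.1 hE).1 (mem_insert_self v F))

end ElementarySymmetric

theorem cast_choose_three (n : ℕ) : (n.choose 3 : ℝ) = n * (n - 1) * (n - 2) / 6 := by
  simp [Nat.cast_choose_eq_descPochhammer_div, descPochhammer_succ_right, Nat.factorial]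


/-- The Lagrangian polynomial of `K_{n+3}^{3-}` at weight `a` on the `n` vertices off the missing
edge and `b` on its three vertices. -/
noncomputable def kMinusLag (n a b : ℝ) : ℝ :=
  n * (n - 1) * (n - 2) / 6 * a ^ 3 + 3 * (n * (n - 1) / 2) * a ^ 2 * b + 3 * n * a * b ^ 2

noncomputable def sqrtDisc (n : ℝ) : ℝ := √((n + 3) ^ 2 - 12)

/-- The value of `kMinusLag n` at `s = n a = n (n + 3 - sqrtDisc n) / 6`, the critical point of
`s ↦ kMinusLag n (s / n) ((1 - s) / 3)` in `[0, 1]`. -/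
noncomputable def kMinusLagMax (n : ℝ) : ℝ :=
  n * (n + 3 - sqrtDisc n) ^ 2 * (n + 3 + 2 * sqrtDisc n) / 648

section Optimization

variable {n : ℝ}

theorem sqrtDisc_sq (hn : 1 ≤ n) : sqrtDisc n ^ 2 = (n + 3) ^ 2 - 12 :=
  Real.sq_sqrt (by nlinarith)

theorem two_le_sqrtDisc (hn : 1 ≤ n) : 2 ≤ sqrtDisc n :=
  Real.le_sqrt_of_sq_le (by nlinarith)

theorem sqrtDisc_lt (hn : 1 ≤ n) : sqrtDisc n < n + 3 :=
  (Real.sqrt_lt' (by linarith)).2 (by linarith)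

theorem kMinusLag_sub_kMinusLagMax (hn : 1 ≤ n) {a b : ℝ} (hab : n * a + 3 * b = 1) :
    3 * n ^ 2 * (kMinusLag n a b - kMinusLagMax n) =
      (n * a - n * (n + 3 - sqrtDisc n) / 6) ^ 2 * (n * a - n * (n + 3 + 2 * sqrtDisc n) / 6) := by
  unfold kMinusLag kMinusLagMax
  linear_combination (n ^ 2 * (3 * n * (n - 1) / 2 * a ^ 2 + 3 * n * a * b + n * a * (1 - n * a)))
      * hab + n ^ 3 * a / 12 * sqrtDisc_sq hn

theorem kMinusLag_le_kMinusLagMax (hn : 1 ≤ n) {a b : ℝ} (hb : 0 ≤ b)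
    (hab : n * a + 3 * b = 1) :
    kMinusLag n a b ≤ kMinusLagMax n := by
  have hδ := two_le_sqrtDisc hn
  have hr : n * a ≤ n * (n + 3 + 2 * sqrtDisc n) / 6 := by nlinarith
  have h := kMinusLag_sub_kMinusLagMax hn hab
  have hneg : 3 * n ^ 2 * (kMinusLag n a b - kMinusLagMax n) ≤ 3 * n ^ 2 * 0 := by
    rw [h, mul_zero]
    exact mul_nonpos_of_nonneg_of_nonpos (sq_nonneg _) (by linarith)
  exact sub_nonpos.1 (le_of_mul_le_mul_left hneg (by positivity))

theorem exists_kMinusLag_eq_kMinusLagMax (hn : 1 ≤ n) :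
    ∃ a b, 0 ≤ a ∧ 0 ≤ b ∧ n * a + 3 * b = 1 ∧ kMinusLag n a b = kMinusLagMax n := by
  set c := n * (n + 3 - sqrtDisc n) / 6
  have hδ := sqrtDisc_lt hn
  have hc : c ≤ 1 := by
    have hsq : (n * (n + 3) - 6) ^ 2 ≤ (n * sqrtDisc n) ^ 2 := by
      rw [mul_pow, sqrtDisc_sq hn]; nlinarith
    have := (abs_le_of_sq_le_sq' hsq (by nlinarith [two_le_sqrtDisc hn])).2
    simp only [c]
    linarith
  have hn0 : n ≠ 0 := by positivity
  have hab : n * (c / n) + 3 * ((1 - c) / 3) = 1 := by field_simp; ring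
  refine ⟨c / n, (1 - c) / 3, div_nonneg (by positivity) (by positivity), by linarith, hab, ?_⟩
  have h := kMinusLag_sub_kMinusLagMax hn hab
  rw [mul_div_cancel₀ c hn0, sub_self, zero_pow two_ne_zero, zero_mul] at h
  exact sub_eq_zero.1 ((mul_eq_zero.1 h).resolve_left (by positivity))

theorem kMinusLagMax_pos (hn : 1 ≤ n) : 0 < kMinusLagMax n := by
  have := sqrtDisc_lt hn
  have := two_le_sqrtDisc hn
  unfold kMinusLagMax
  have : 0 < n + 3 - sqrtDisc n := by linarith
  positivity

end Optimization

theorem not_isSquare_nine_mul_sq_add (t : ℤ) : ¬IsSquare (9 * t ^ 2 + 18 * t - 3) := by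
  rintro ⟨r, hr⟩
  obtain ⟨j, rfl⟩ : (3 : ℤ) ∣ r :=
    Int.prime_three.dvd_of_dvd_pow (n := 2) ⟨3 * t ^ 2 + 6 * t - 1, by rw [sq, ← hr]; ring⟩
  have h9 : 9 * (j * j) = 9 * t ^ 2 + 18 * t - 3 := by linarith
  generalize j * j = J at h9
  generalize t ^ 2 = T at h9
  omega

theorem irrational_kMinusLagMax_three_mul {t : ℕ} (ht : 1 ≤ t) :
    Irrational (kMinusLagMax (3 * t)) := by
  have ht' : (1 : ℝ) ≤ t := by exact_mod_cast ht
  have hirr : Irrational (sqrtDisc (3 * t)) := by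
    have hδ : sqrtDisc (3 * t) = √((9 * t ^ 2 + 18 * t - 3 : ℤ) : ℝ) := by
      unfold sqrtDisc; push_cast; ring_nf
    rw [hδ, irrational_sqrt_intCast_iff_of_nonneg (by nlinarith)]
    exact not_isSquare_nine_mul_sq_add t
  have hq : (t * (9 * t ^ 2 + 18 * t - 3) / 108 : ℚ) ≠ 0 := by
    have : (1 : ℚ) ≤ t := by exact_mod_cast ht
    exact div_ne_zero (mul_ne_zero (by positivity) (by nlinarith)) (by norm_num)
  have hval : kMinusLagMax (3 * t) =
      ((t * (36 * (3 * t + 3) - 2 * (3 * t + 3) ^ 3) / 216 : ℚ) : ℝ) +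
        ((t * (9 * t ^ 2 + 18 * t - 3) / 108 : ℚ) : ℝ) * sqrtDisc (3 * t) := by
    unfold kMinusLagMax
    push_cast
    linear_combination 3 * t * (2 * sqrtDisc (3 * t) - 3 * (3 * t + 3)) / 648 *
      sqrtDisc_sq (n := 3 * t) (by linarith)
  rw [hval]
  exact (hirr.ratCast_mul hq).ratCast_add _

section CompleteMinusEdge

variable {V : Type*} [DecidableEq V] {R : Finset V}

theorem map_swap_eq_self {i j : V} (hij : i ∈ R ↔ j ∈ R) :
    R.map (Equiv.swap i j).toEmbedding = R := by
  ext k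
  rw [mem_map_equiv, Equiv.symm_swap, Equiv.swap_apply_def]
  split_ifs with hki hkj
  · rw [hki, hij]
  · rw [hkj, hij]
  · rfl

variable [Fintype V]

def completeMinusEdge (R : Finset V) : Finset (Finset V) :=
  (univ.powersetCard 3).erase R

theorem sum_ite_mem_const (a b : ℝ) :
    ∑ k, (if k ∈ R then b else a) = #Rᶜ * a + #R * b := by
  rw [sum_ite, sum_const, sum_const]
  simp [filter_not, compl_eq_univ_sdiff, add_comm]

theorem lagPoly_completeMinusEdge_ite (hR : #R = 3) (a b : ℝ) :
    lagPoly (completeMinusEdge R) (fun k => if k ∈ R then b else a) =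
      kMinusLag (#Rᶜ) a b := by
  set x : V → ℝ := fun k => if k ∈ R then b else a
  have hRmem : R ∈ univ.powersetCard 3 := mem_powersetCard.2 ⟨subset_univ R, hR⟩
  have hprodR : ∏ k ∈ R, x k = b ^ 3 := by
    rw [prod_congr rfl fun k hk => if_pos hk, prod_const, hR]
  have hcore : ∀ k ∈ Rᶜ, x k = a := fun k hk => if_neg (mem_compl.1 hk)
  obtain ⟨u, v, w, huv, huw, hvw, rfl⟩ := card_eq_three.1 hR
  have huniv : (univ : Finset V) = insert u (insert v (insert w {u, v, w}ᶜ)) := by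
    ext k; by_cases k = u <;> by_cases k = v <;> by_cases k = w <;> simp_all
  have hw : w ∉ ({u, v, w} : Finset V)ᶜ := by simp
  have hv : v ∉ insert w ({u, v, w} : Finset V)ᶜ := by simp [hvw]
  have hu : u ∉ insert v (insert w ({u, v, w} : Finset V)ᶜ) := by simp [huv, huw]
  have hxu : x u = b := if_pos (by simp)
  have hxv : x v = b := if_pos (by simp)
  have hxw : x w = b := if_pos (by simp)
  rw [lagPoly, completeMinusEdge, sum_erase_eq_sub hRmem, hprodR, huniv]
  simp only [sum_powersetCard_succ_insert hu, sum_powersetCard_succ_insert hv,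
    sum_powersetCard_succ_insert hw, sum_powersetCard_prod_of_eqOn hcore, hxu, hxv, hxw]
  generalize #({u, v, w}ᶜ : Finset V) = n
  simp only [zero_add, Nat.reduceAdd, Nat.choose_zero_right, Nat.choose_one_right,
    cast_choose_three, Nat.cast_choose_two, kMinusLag]
  ring

theorem map_mem_completeMinusEdge {σ : Equiv.Perm V} (hσ : R.map σ.toEmbedding = R)
    {E : Finset V} (hE : E ∈ completeMinusEdge R) :
    E.map σ.toEmbedding ∈ completeMinusEdge R := by
  obtain ⟨hER, hE⟩ := mem_erase.1 hE
  refine mem_erase.2 ⟨fun h => hER (map_injective _ (h.trans hσ.symm)), ?_⟩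
  exact mem_powersetCard.2 ⟨subset_univ _, (card_map _).trans (mem_powersetCard.1 hE).2⟩

theorem exists_mem_insert_insert_mem_completeMinusEdge (hR : #R = 3) {i j : V} (hij : i ≠ j)
    (hcls : i ∈ R ↔ j ∈ R) {F : Finset V} (hF : F ∈ completeMinusEdge R) :
    ∃ k ∈ F, {i, j, k} ∈ completeMinusEdge R := by
  obtain ⟨hFR, hF⟩ := mem_erase.1 hF
  have hF3 := (mem_powersetCard.1 hF).2
  have triple {k} (hki : k ≠ i) (hkj : k ≠ j) (hR' : {i, j, k} ≠ R) :
      {i, j, k} ∈ completeMinusEdge R :=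
    mem_erase.2 ⟨hR', mem_powersetCard.2 ⟨subset_univ _,
      card_eq_three.2 ⟨i, j, k, hij, hki.symm, hkj.symm, rfl⟩⟩⟩
  by_cases hi : i ∈ R
  · obtain ⟨k, hkF, hkR⟩ :=
      not_subset.1 fun hsub => hFR (eq_of_subset_of_card_le hsub (by omega))
    refine ⟨k, hkF, triple (ne_of_mem_of_not_mem hi hkR).symm
      (ne_of_mem_of_not_mem (hcls.1 hi) hkR).symm fun h => hkR (h ▸ by simp)⟩
  · obtain ⟨k, hk⟩ : (F \ {i, j}).Nonempty := by
      rw [← card_pos]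
      have := le_card_sdiff {i, j} F
      have := card_le_two (a := i) (b := j)
      omega
    obtain ⟨hkF, hkij⟩ := mem_sdiff.1 hk
    simp only [mem_insert, mem_singleton, not_or] at hkij
    exact ⟨k, hkF, triple hkij.1 hkij.2 fun h => hi (h ▸ by simp)⟩

theorem apply_eq_apply_of_isMaxOn_completeMinusEdge (hR : #R = 3) {x : V → ℝ}
    (hx : x ∈ stdSimplex ℝ V)
    (hmax : IsMaxOn (lagPoly (completeMinusEdge R)) (stdSimplex ℝ V) x)
    (hpos : 0 < lagPoly (completeMinusEdge R) x) {i j : V} (hcls : i ∈ R ↔ j ∈ R) :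
    x i = x j := by
  rcases eq_or_ne i j with rfl | hij
  · rfl
  obtain ⟨F, hF, hFpos⟩ := exists_forall_pos_of_lagPoly_pos hx.1 hpos
  obtain ⟨k, hkF, hk⟩ := exists_mem_insert_insert_mem_completeMinusEdge hR hij hcls hF
  refine apply_eq_apply_of_isMaxOn_of_swap hx hmax (fun E hE => map_mem_completeMinusEdge
    (map_swap_eq_self hcls) hE) hk (by simp) (by simp) fun l hl hli hlj => ?_
  simp only [mem_insert, mem_singleton, hli, hlj, false_or] at hl
  exact hl ▸ hFpos k hkF

theorem lagPoly_completeMinusEdge_eq_kMinusLagMax (hR : #R = 3) (hRc : Rᶜ.Nonempty)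
    {x : V → ℝ} (hx : x ∈ stdSimplex ℝ V)
    (hmax : IsMaxOn (lagPoly (completeMinusEdge R)) (stdSimplex ℝ V) x) :
    lagPoly (completeMinusEdge R) x = kMinusLagMax #Rᶜ := by
  have hn : (1 : ℝ) ≤ #Rᶜ := by exact_mod_cast hRc.card_pos
  obtain ⟨a, b, ha, hb, hab, hval⟩ := exists_kMinusLag_eq_kMinusLagMax hn
  have hlower : kMinusLagMax #Rᶜ ≤ lagPoly (completeMinusEdge R) x := by
    rw [← hval, ← lagPoly_completeMinusEdge_ite hR]
    refine hmax ⟨fun k => ite_nonneg hb ha, ?_⟩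
    rw [sum_ite_mem_const, hR]
    push_cast
    exact hab
  obtain ⟨i₀, hi₀⟩ := hRc
  obtain ⟨j₀, hj₀⟩ : R.Nonempty := card_pos.1 (by omega)
  have hpos := (kMinusLagMax_pos hn).trans_le hlower
  have hxeq : x = fun k => if k ∈ R then x j₀ else x i₀ := funext fun k => by
    split_ifs with hk
    · exact apply_eq_apply_of_isMaxOn_completeMinusEdge hR hx hmax hpos (iff_of_true hk hj₀)
    · exact apply_eq_apply_of_isMaxOn_completeMinusEdge hR hx hmax hpos
        (iff_of_false hk (mem_compl.1 hi₀))
  have hsum := hx.2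
  rw [hxeq] at hsum
  beta_reduce at hsum
  rw [sum_ite_mem_const, hR, Nat.cast_ofNat] at hsum
  refine le_antisymm ?_ hlower
  rw [hxeq, lagPoly_completeMinusEdge_ite hR]
  exact kMinusLag_le_kMinusLagMax hn (hx.1 j₀) hsum

end CompleteMinusEdge

/-- For every positive integer `t`, the Lagrangian of `K_{3(t+1)}^{3-}` is irrational. -/
theorem lagrangian_Kminus_irrational (t : ℕ) (ht : 1 ≤ t) (L : ℝ)
    (hL : IsGreatest (lagValues (Kminus t)) L) : Irrational L := by
  obtain ⟨x, hx, rfl⟩ := hL.1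
  set R := univ.filter fun i : Fin (3 * t + 3) => 3 * t ≤ i.val
  have hRc : #Rᶜ = 3 * t := by
    rw [compl_filter]
    simp only [not_le, Fin.card_filter_val_lt]
    omega
  have hR : #R = 3 := by
    have := card_add_card_compl R
    rw [hRc, Fintype.card_fin] at this
    omega
  have hmax : IsMaxOn (lagPoly (completeMinusEdge R)) (stdSimplex ℝ _) x :=
    fun y hy => hL.2 ⟨y, hy, rfl⟩
  have hval := lagPoly_completeMinusEdge_eq_kMinusLagMax hR (card_pos.1 (by omega)) hx hmax
  rw [hRc, Nat.cast_mul, Nat.cast_ofNat] at hval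
  rw [show Kminus t = completeMinusEdge R from rfl, hval]
  exact irrational_kMinusLagMax_three_mul ht
end

section
/- For every positive integer t, with s = 3t, the function f(a) = 2a^3 - (s+3)a^2 + 2a on the interval [0, 1/s] attains its maximum at a(s) = (s+3 - sqrt(s^2+6s-3))/6, and 0 < a(s) < 1/s. -/
/-! The critical points of `f(x) = 2x³ - c x² + 2x` are the roots of `3x² - c x + 1`. If `a` is one
of them, then `f x - f a = (x - a)² (2x + 4a - c)`, so `a` maximizes `f` wherever `2x + 4a ≤ c`.
For `c = s + 3` the smaller root `a = (c - √(c² - 12))/6` is positive, and it is below `1/s` because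
`3x² - c x + 1` is negative at `1/s`; hence on `[0, 1/s]` we have `2x + 4a ≤ 6/s ≤ s + 3`. -/

noncomputable def smallerRoot (c : ℝ) : ℝ := (c - √(c ^ 2 - 12)) / 6

lemma smallerRoot_isRoot {c : ℝ} (hc : 12 ≤ c ^ 2) :
    3 * smallerRoot c ^ 2 - c * smallerRoot c + 1 = 0 := by
  have hr := Real.sq_sqrt (sub_nonneg.2 hc)
  unfold smallerRoot
  linear_combination hr / 12

lemma smallerRoot_pos {c : ℝ} (hc : 0 < c) : 0 < smallerRoot c := by
  have : √(c ^ 2 - 12) < c := (Real.sqrt_lt' hc).2 (by linarith)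
  unfold smallerRoot
  linarith

-- `12 (3y² - c y + 1) = (6y - c)² - (c² - 12)`, so a negative value forces `|6y - c| < √(c² - 12)`.
lemma smallerRoot_lt_of_neg {c y : ℝ} (hy : 3 * y ^ 2 - c * y + 1 < 0) : smallerRoot c < y := by
  have hdisc : (6 * y - c) ^ 2 < c ^ 2 - 12 := by linarith
  have hr := Real.sq_sqrt (le_of_lt (lt_of_le_of_lt (sq_nonneg _) hdisc))
  have := abs_lt_of_sq_lt_sq (hr ▸ hdisc) (Real.sqrt_nonneg _)
  unfold smallerRoot
  linarith [(abs_lt.1 this).1]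

lemma cubic_sub_cubic_of_isRoot {c a : ℝ} (ha : 3 * a ^ 2 - c * a + 1 = 0) (x : ℝ) :
    (2 * x ^ 3 - c * x ^ 2 + 2 * x) - (2 * a ^ 3 - c * a ^ 2 + 2 * a)
      = (x - a) ^ 2 * (2 * x + 4 * a - c) := by
  linear_combination 2 * (x - a) * ha

lemma isMaxOn_cubic_of_isRoot {c a : ℝ} {S : Set ℝ} (ha : 3 * a ^ 2 - c * a + 1 = 0)
    (hS : ∀ x ∈ S, 2 * x + 4 * a ≤ c) :
    IsMaxOn (fun x : ℝ => 2 * x ^ 3 - c * x ^ 2 + 2 * x) S a := fun x hx => by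
  show 2 * x ^ 3 - c * x ^ 2 + 2 * x ≤ 2 * a ^ 3 - c * a ^ 2 + 2 * a
  nlinarith [cubic_sub_cubic_of_isRoot ha x,
    mul_nonneg (sq_nonneg (x - a)) (sub_nonneg.2 (hS x hx))]

/-- For every positive integer `t`, with `s = 3t`, the function
`f(a) = 2a³ - (s+3)a² + 2a` attains its maximum on `[0, 1/s]` at
`a(s) = (s + 3 - √(s² + 6s - 3))/6`, and `0 < a(s) < 1/s`. -/
theorem cubic_max (t : ℕ) (ht : 1 ≤ t) :
    let s : ℝ := 3 * t
    let a : ℝ := (s + 3 - Real.sqrt (s ^ 2 + 6 * s - 3)) / 6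
    0 < a ∧ a < 1 / s ∧
      IsMaxOn (fun x : ℝ => 2 * x ^ 3 - (s + 3) * x ^ 2 + 2 * x) (Set.Icc 0 (1 / s)) a := by
  intro s a
  have hs : 3 ≤ s := by
    have : (1 : ℝ) ≤ t := by exact_mod_cast ht
    simp only [s]
    linarith
  have ha : a = smallerRoot (s + 3) := by
    simp only [a, smallerRoot]
    ring_nf
  have hneg : 3 * (1 / s) ^ 2 - (s + 3) * (1 / s) + 1 < 0 := by
    have : 3 * (1 / s) ^ 2 - (s + 3) * (1 / s) + 1 = 3 * (1 - s) / s ^ 2 := by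
      field_simp
      ring
    rw [this]
    exact div_neg_of_neg_of_pos (by linarith) (by positivity)
  have hlt : a < 1 / s := ha ▸ smallerRoot_lt_of_neg hneg
  have hs_inv : 1 / s ≤ 1 / 3 := one_div_le_one_div_of_le (by norm_num) hs
  refine ⟨ha ▸ smallerRoot_pos (by linarith), hlt, ?_⟩
  refine isMaxOn_cubic_of_isRoot (ha ▸ smallerRoot_isRoot (by nlinarith)) fun x hx => ?_
  linarith [hx.2]
end

section
/- Let G be a 3-graph on m vertices and let {v_1, v_2} be a symmetric pair of vertices in G with codegree d(v_1,v_2) = k >= a+b+1 where a, b are positive integers. Then the Lagrangian of the (a,b)-mix-crossed blowup G box_{(a,b)} {v_1,v_2} equals the Lagrangian of G. -/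
open Finset

/-- The codegree neighbourhood `N_G(v₁, v₂)` of a pair of vertices in a 3-graph. -/
def coNbhd {m : ℕ} (G : Finset (Finset (Fin m))) (v₁ v₂ : Fin m) : Finset (Fin m) :=
  Finset.univ.filter (fun w => ({w, v₁, v₂} : Finset (Fin m)) ∈ G)

/-- The `(a,b)`-mix-crossed blowup of a 3-graph `G` on the pair `{v₁, v₂}`, where
`A, B, C` is the partition of `N_G(v₁, v₂)` into the three classes of sizes `a`, `b` and
`k - a - b`. The two new vertices are `Sum.inr 0 = v₁'` and `Sum.inr 1 = v₂'`: all edges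
through both `v₁` and `v₂` are removed, `v₁'` and `v₂'` are clones of `v₁` and `v₂`, and
the prescribed new edges through `A`, `B`, `C` are added. -/
def mixBlowup {m : ℕ} (G : Finset (Finset (Fin m))) (v₁ v₂ : Fin m)
    (A B C : Finset (Fin m)) : Finset (Finset (Fin m ⊕ Fin 2)) :=
  ((G.filter (fun E => ¬ (v₁ ∈ E ∧ v₂ ∈ E))).image (Finset.image Sum.inl))
  ∪ ((G.filter (fun E => v₁ ∈ E ∧ v₂ ∉ E)).image
      (fun E => insert (Sum.inr 0) ((E.erase v₁).image Sum.inl)))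
  ∪ ((G.filter (fun E => v₂ ∈ E ∧ v₁ ∉ E)).image
      (fun E => insert (Sum.inr 1) ((E.erase v₂).image Sum.inl)))
  ∪ A.biUnion (fun w =>
      {{Sum.inl w, Sum.inl v₁, Sum.inl v₂}, {Sum.inl w, Sum.inl v₁, Sum.inr 1},
       {Sum.inl w, Sum.inr 0, Sum.inl v₂}, {Sum.inl w, Sum.inr 0, Sum.inr 1}})
  ∪ B.biUnion (fun w =>
      {{Sum.inl w, Sum.inl v₁, Sum.inr 0}, {Sum.inl w, Sum.inl v₁, Sum.inr 1},
       {Sum.inl w, Sum.inl v₂, Sum.inr 0}, {Sum.inl w, Sum.inl v₂, Sum.inr 1}})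
  ∪ C.biUnion (fun w =>
      {{Sum.inl w, Sum.inl v₁, Sum.inr 0}, {Sum.inl w, Sum.inl v₁, Sum.inl v₂},
       {Sum.inl w, Sum.inr 0, Sum.inr 1}, {Sum.inl w, Sum.inl v₂, Sum.inr 1}})

/-!
Write `p, p', q, q'` for the weights of `v₁, v₁', v₂, v₂'`. The edges of the blowup coming from
edges of `G` that do not contain both `v₁` and `v₂` (kept, or with `v₁` moved to `v₁'`, or `v₂`
to `v₂'`) contribute the Lagrangian polynomial of this pair-free part `G₀` of `G` at weight
`p + p'` on `v₁` and `q + q'` on `v₂`. Each `w` in `A`, `B`, `C` is the apex of a cone over a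
`K_{2,2}` on `{v₁, v₁', v₂, v₂'}`, contributing `x_w (p + p')(q + q')`, `x_w (p + q)(p' + q')` or
`x_w (p + q')(p' + q)`.

Since the pair is symmetric, `v₁` and `v₂` have the same link in `G₀`, so its polynomial depends
on the weights of `v₁, v₂` only through their sum. Putting weight `t = (p + p' + q + q') / 2` on
both `v₁` and `v₂` therefore leaves that part unchanged, while by AM-GM each product above is at
most `t²`, the factor `x_{v₁} x_{v₂}` of the edge `w v₁ v₂` of `G`. Conversely, spreading the
weight of `v₁, v₂` evenly over the four vertices turns every product into
`((x_{v₁} + x_{v₂}) / 2)² ≥ x_{v₁} x_{v₂}`.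
-/

section LagrangianPolynomial

variable {V : Type*} [DecidableEq V]

lemma lagPoly_union {H K : Finset (Finset V)} (hHK : Disjoint H K) (x : V → ℝ) :
    lagPoly (H ∪ K) x = lagPoly H x + lagPoly K x :=
  sum_union hHK

lemma lagPoly_congr {H : Finset (Finset V)} {x x' : V → ℝ}
    (h : ∀ E ∈ H, ∀ i ∈ E, x i = x' i) : lagPoly H x = lagPoly H x' :=
  sum_congr rfl fun E hE => prod_congr rfl (h E hE)

lemma lagPoly_image_image {W : Type*} [DecidableEq W] {f : V → W} (hf : Function.Injective f)
    (H : Finset (Finset V)) (y : W → ℝ) :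
    lagPoly (H.image (image f)) y = lagPoly H (y ∘ f) := by
  unfold lagPoly
  rw [sum_image fun E _ E' _ h => image_injective hf h]
  exact sum_congr rfl fun E _ => prod_image fun i _ j _ h => hf h

lemma lagPoly_image_insert {K : Finset (Finset V)} {c : V} (hc : ∀ S ∈ K, c ∉ S)
    (y : V → ℝ) : lagPoly (K.image (insert c)) y = y c * lagPoly K y := by
  unfold lagPoly
  have hinj : Set.InjOn (insert c) (K : Set (Finset V)) := fun S hS S' hS' h => by
    rw [← erase_insert (hc S hS), ← erase_insert (hc S' hS'), h]
  rw [sum_image hinj, mul_sum]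
  exact sum_congr rfl fun S hS => prod_insert (hc S hS)

end LagrangianPolynomial

section Cones

variable {V α : Type*} [DecidableEq V]

def cone (f : α → V) (W : Finset α) (K : Finset (Finset V)) : Finset (Finset V) :=
  W.biUnion fun w => K.image (insert (f w))

def bipartitePairs (a a' b b' : V) : Finset (Finset V) :=
  {{a, b}, {a, b'}, {a', b}, {a', b'}}

variable {f : α → V}

lemma disjoint_cone (hf : Function.Injective f) {W W' : Finset α} (hWW' : Disjoint W W')
    {K K' : Finset (Finset V)} (hK' : ∀ w ∈ W, ∀ S ∈ K', f w ∉ S) :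
    Disjoint (cone f W K) (cone f W' K') := by
  simp only [cone, disjoint_left, mem_biUnion, mem_image]
  rintro _ ⟨w, hw, S, -, rfl⟩ ⟨w', hw', S', hS', hSS'⟩
  have : f w ∈ insert (f w') S' := hSS' ▸ mem_insert_self _ _
  rcases mem_insert.1 this with h | h
  · exact disjoint_left.1 hWW' hw (hf h ▸ hw')
  · exact hK' w hw S' hS' h

lemma lagPoly_cone [DecidableEq α] (hf : Function.Injective f) {W : Finset α}
    {K : Finset (Finset V)} (hK : ∀ w ∈ W, ∀ S ∈ K, f w ∉ S) (y : V → ℝ) :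
    lagPoly (cone f W K) y = (∑ w ∈ W, y (f w)) * lagPoly K y := by
  have hdisj : (W : Set α).PairwiseDisjoint fun w => K.image (insert (f w)) := by
    intro w hw w' _ hww'
    simpa only [cone, singleton_biUnion] using
      disjoint_cone hf (disjoint_singleton.2 hww') (by simpa using hK w hw)
  unfold lagPoly cone
  rw [sum_biUnion hdisj, sum_mul]
  exact sum_congr rfl fun w hw => lagPoly_image_insert (hK w hw) y

lemma mem_bipartitePairs {a a' b b' : V} {S : Finset V} :
    S ∈ bipartitePairs a a' b b' ↔
      ∃ x ∈ ({a, a'} : Finset V), ∃ y ∈ ({b, b'} : Finset V), S = {x, y} := by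
  simp [bipartitePairs, or_assoc]

lemma subset_of_mem_bipartitePairs {a a' b b' : V} {S : Finset V}
    (hS : S ∈ bipartitePairs a a' b b') : S ⊆ {a, a', b, b'} := by
  obtain ⟨x, hx, y, hy, rfl⟩ := mem_bipartitePairs.1 hS
  simp only [mem_insert, mem_singleton] at hx hy
  rcases hx with rfl | rfl <;> rcases hy with rfl | rfl <;> simp [insert_subset_iff]

lemma notMem_of_mem_bipartitePairs {a a' b b' c : V} (hc : c ∉ ({a, a', b, b'} : Finset V))
    {S : Finset V} (hS : S ∈ bipartitePairs a a' b b') : c ∉ S :=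
  fun h => hc (subset_of_mem_bipartitePairs hS h)

lemma one_lt_card_inter_of_mem_cone_bipartitePairs {W : Finset α} {a a' b b' : V}
    {Z : Finset V} (hZ : {a, a', b, b'} ⊆ Z) (ha : a ∉ ({b, b'} : Finset V))
    (ha' : a' ∉ ({b, b'} : Finset V)) {e : Finset V}
    (he : e ∈ cone f W (bipartitePairs a a' b b')) : 1 < (e ∩ Z).card := by
  obtain ⟨w, -, S, hS, rfl⟩ : ∃ w ∈ W, ∃ S ∈ bipartitePairs a a' b b', insert (f w) S = e := by
    simpa [cone] using he
  have hSZ := (subset_of_mem_bipartitePairs hS).trans hZ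
  obtain ⟨x, hx, y, hy, rfl⟩ := mem_bipartitePairs.1 hS
  refine one_lt_card.2 ⟨x, ?_, y, ?_, ?_⟩
  · exact mem_inter.2 ⟨by simp, hSZ (by simp)⟩
  · exact mem_inter.2 ⟨by simp, hSZ (by simp)⟩
  · rintro rfl
    simp only [mem_insert, mem_singleton] at hx
    rcases hx with rfl | rfl <;> contradiction

lemma lagPoly_bipartitePairs {a a' b b' : V} (ha : a ≠ a') (hb : b ≠ b')
    (hab : a ∉ ({b, b'} : Finset V)) (ha'b : a' ∉ ({b, b'} : Finset V)) (y : V → ℝ) :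
    lagPoly (bipartitePairs a a' b b') y = (y a + y a') * (y b + y b') := by
  have hcone : bipartitePairs a a' b b' = cone id {a, a'} {{b}, {b'}} := by
    simp only [bipartitePairs, cone, biUnion_insert, singleton_biUnion, image_insert,
      image_singleton, insert_union, singleton_union, id]
  have hleaves : lagPoly {{b}, {b'}} y = y b + y b' := by
    simp [lagPoly, hb]
  rw [hcone, lagPoly_cone Function.injective_id (by simp_all), hleaves, sum_pair ha]
  rfl

end Cones

section PairDecomposition

variable {V : Type*} [DecidableEq V] (G : Finset (Finset V)) (v w : V)

def pairFree : Finset (Finset V) :=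
  G.filter fun E => ¬ (v ∈ E ∧ w ∈ E)

-- The paper's `L_G(v) - w`.
def pairLink : Finset (Finset V) :=
  (G.filter fun E => v ∈ E ∧ w ∉ E).image (·.erase v)

variable {G v w}

lemma notMem_of_mem_pairLink {S : Finset V} (hS : S ∈ pairLink G v w) : v ∉ S ∧ w ∉ S := by
  obtain ⟨E, hE, rfl⟩ := mem_image.1 hS
  exact ⟨notMem_erase v E, fun h => (mem_filter.1 hE).2.2 (mem_of_mem_erase h)⟩

lemma mem_pairLink (hvw : v ≠ w) {S : Finset V} :
    S ∈ pairLink G v w ↔ v ∉ S ∧ w ∉ S ∧ insert v S ∈ G := by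
  refine ⟨fun hS => ⟨(notMem_of_mem_pairLink hS).1, (notMem_of_mem_pairLink hS).2, ?_⟩, ?_⟩
  · obtain ⟨E, hE, rfl⟩ := mem_image.1 hS
    rw [insert_erase (mem_filter.1 hE).2.1]
    exact (mem_filter.1 hE).1
  · rintro ⟨hv, hw, hG⟩
    refine mem_image.2 ⟨insert v S, mem_filter.2 ⟨hG, mem_insert_self v S, ?_⟩, erase_insert hv⟩
    simpa [hvw.symm] using hw

lemma pairLink_comm (hvw : v ≠ w)
    (hsym : ∀ S : Finset V, v ∉ S → w ∉ S → (insert v S ∈ G ↔ insert w S ∈ G)) :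
    pairLink G v w = pairLink G w v := by
  ext S
  simp only [mem_pairLink hvw, mem_pairLink hvw.symm]
  exact ⟨fun ⟨hv, hw, hG⟩ => ⟨hw, hv, (hsym S hv hw).1 hG⟩,
    fun ⟨hw, hv, hG⟩ => ⟨hv, hw, (hsym S hv hw).2 hG⟩⟩

lemma lagPoly_filter_mem_notMem (x : V → ℝ) :
    lagPoly (G.filter fun E => v ∈ E ∧ w ∉ E) x = x v * lagPoly (pairLink G v w) x := by
  unfold lagPoly pairLink
  rw [sum_image fun E hE E' hE' => erase_injOn' v (mem_filter.1 hE).2.1 (mem_filter.1 hE').2.1,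
    mul_sum]
  exact sum_congr rfl fun E hE => (mul_prod_erase E x (mem_filter.1 hE).2.1).symm

lemma lagPoly_pairFree (x : V → ℝ) :
    lagPoly (pairFree G v w) x = lagPoly (G.filter fun E => v ∉ E ∧ w ∉ E) x
      + x v * lagPoly (pairLink G v w) x + x w * lagPoly (pairLink G w v) x := by
  have hv : (pairFree G v w).filter (fun E => v ∈ E) = G.filter fun E => v ∈ E ∧ w ∉ E := by
    ext E; simp only [pairFree, mem_filter]; tauto
  have hw : ((pairFree G v w).filter fun E => v ∉ E).filter (fun E => w ∈ E)
      = G.filter fun E => w ∈ E ∧ v ∉ E := by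
    ext E; simp only [pairFree, mem_filter]; tauto
  have hvw : ((pairFree G v w).filter fun E => v ∉ E).filter (fun E => w ∉ E)
      = G.filter fun E => v ∉ E ∧ w ∉ E := by
    ext E; simp only [pairFree, mem_filter]; tauto
  rw [← lagPoly_filter_mem_notMem, ← lagPoly_filter_mem_notMem, lagPoly,
    ← sum_filter_add_sum_filter_not _ (fun E => v ∈ E),
    ← sum_filter_add_sum_filter_not ((pairFree G v w).filter fun E => v ∉ E) (fun E => w ∈ E),
    hv, hw, hvw]
  simp only [lagPoly]
  ring

lemma lagPoly_pairFree_of_eqOn {x x' : V → ℝ} (hoff : ∀ i, i ≠ v → i ≠ w → x i = x' i) :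
    lagPoly (pairFree G v w) x' = lagPoly (G.filter fun E => v ∉ E ∧ w ∉ E) x
      + x' v * lagPoly (pairLink G v w) x + x' w * lagPoly (pairLink G w v) x := by
  have hoff' : ∀ S : Finset V, v ∉ S ∧ w ∉ S → ∀ i ∈ S, x' i = x i := by
    rintro S ⟨hv, hw⟩ i hi
    exact (hoff i (ne_of_mem_of_not_mem hi hv) (ne_of_mem_of_not_mem hi hw)).symm
  rw [lagPoly_pairFree,
    lagPoly_congr fun E hE => hoff' E (mem_filter.1 hE).2,
    lagPoly_congr fun S hS => hoff' S (notMem_of_mem_pairLink hS),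
    lagPoly_congr fun S hS => hoff' S (notMem_of_mem_pairLink hS).symm]

lemma lagPoly_pairFree_eq_of_add_eq (hvw : v ≠ w)
    (hsym : ∀ S : Finset V, v ∉ S → w ∉ S → (insert v S ∈ G ↔ insert w S ∈ G))
    {x x' : V → ℝ} (hoff : ∀ i, i ≠ v → i ≠ w → x i = x' i) (hsum : x v + x w = x' v + x' w) :
    lagPoly (pairFree G v w) x = lagPoly (pairFree G v w) x' := by
  rw [lagPoly_pairFree_of_eqOn hoff, lagPoly_pairFree, ← pairLink_comm hvw hsym]
  linear_combination lagPoly (pairLink G v w) x * hsum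

end PairDecomposition

section ThreeGraph

variable {m : ℕ} {G : Finset (Finset (Fin m))} {v₁ v₂ : Fin m}

lemma notMem_coNbhd_left (hG3 : ∀ E ∈ G, E.card = 3) : v₁ ∉ coNbhd G v₁ v₂ := by
  intro h
  have h3 := hG3 _ (mem_filter.1 h).2
  rw [insert_eq_of_mem (mem_insert_self _ _)] at h3
  exact absurd (card_le_two.trans_eq' h3) (by norm_num)

lemma notMem_coNbhd_right (hG3 : ∀ E ∈ G, E.card = 3) : v₂ ∉ coNbhd G v₁ v₂ := by
  intro h
  have h3 := hG3 _ (mem_filter.1 h).2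
  rw [insert_eq_of_mem (by simp)] at h3
  exact absurd (card_le_two.trans_eq' h3) (by norm_num)

lemma filter_mem_and_mem_eq_image_coNbhd (hG3 : ∀ E ∈ G, E.card = 3) (hne : v₁ ≠ v₂) :
    G.filter (fun E => v₁ ∈ E ∧ v₂ ∈ E) = (coNbhd G v₁ v₂).image fun u => {u, v₁, v₂} := by
  ext E
  simp only [mem_filter, mem_image, coNbhd, mem_univ, true_and]
  constructor
  · rintro ⟨hE, h₁, h₂⟩
    have h₂' : v₂ ∈ E.erase v₁ := mem_erase.2 ⟨hne.symm, h₂⟩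
    obtain ⟨u, hu⟩ := card_eq_one.1 (by
      rw [card_erase_of_mem h₂', card_erase_of_mem h₁, hG3 E hE] :
        ((E.erase v₁).erase v₂).card = 1)
    have hEu : E = {u, v₁, v₂} := by
      rw [← insert_erase h₁, ← insert_erase h₂', hu]
      ext; simp only [mem_insert, mem_singleton]; tauto
    exact ⟨u, hEu ▸ hE, hEu.symm⟩
  · rintro ⟨u, hu, rfl⟩
    simp [hu]

lemma lagPoly_eq_lagPoly_pairFree_add (hG3 : ∀ E ∈ G, E.card = 3) (hne : v₁ ≠ v₂)
    (x : Fin m → ℝ) :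
    lagPoly G x = lagPoly (pairFree G v₁ v₂) x + x v₁ * x v₂ * ∑ u ∈ coNbhd G v₁ v₂, x u := by
  have hpair : ∀ u ∈ coNbhd G v₁ v₂, u ∉ ({v₁, v₂} : Finset (Fin m)) := fun u hu => by
    rintro h
    rcases mem_insert.1 h with rfl | h
    · exact notMem_coNbhd_left hG3 hu
    · exact notMem_coNbhd_right hG3 (mem_singleton.1 h ▸ hu)
  have hinj : Set.InjOn (fun u => ({u, v₁, v₂} : Finset (Fin m))) (coNbhd G v₁ v₂) :=
    fun u hu _ _ h => (insert_inj (hpair u hu)).1 h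
  unfold lagPoly pairFree
  rw [← sum_filter_add_sum_filter_not G (fun E => v₁ ∈ E ∧ v₂ ∈ E),
    filter_mem_and_mem_eq_image_coNbhd hG3 hne, sum_image hinj, mul_sum, add_comm]
  congr 1
  refine sum_congr rfl fun u hu => ?_
  rw [prod_insert (hpair u hu), prod_pair hne]
  ring

end ThreeGraph

lemma sum_eq_sum_of_eqOn_of_add_eq {ι : Type*} [Fintype ι] [DecidableEq ι] {v w : ι}
    (hvw : v ≠ w) {x x' : ι → ℝ} (hoff : ∀ i, i ≠ v → i ≠ w → x i = x' i)
    (hsum : x v + x w = x' v + x' w) : ∑ i, x i = ∑ i, x' i := by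
  have hcompl : ∀ i ∈ ({v, w} : Finset ι)ᶜ, x i = x' i := fun i hi => by
    simp only [mem_compl, mem_insert, mem_singleton, not_or] at hi
    exact hoff i hi.1 hi.2
  rw [← sum_add_sum_compl {v, w} x, ← sum_add_sum_compl {v, w} x', sum_pair hvw, sum_pair hvw,
    hsum, sum_congr rfl hcompl]

lemma weighted_pairings_le {sA sB sC p p' q q' : ℝ} (hA : 0 ≤ sA) (hB : 0 ≤ sB) (hC : 0 ≤ sC) :
    sA * ((p + p') * (q + q')) + sB * ((p + q) * (p' + q')) + sC * ((p + q') * (p' + q))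
      ≤ (sA + sB + sC) * ((p + p' + q + q') / 2) ^ 2 := by
  have h₁ : (p + p') * (q + q') ≤ ((p + p' + q + q') / 2) ^ 2 := by
    linarith [four_mul_le_sq_add (p + p') (q + q')]
  have h₂ : (p + q) * (p' + q') ≤ ((p + p' + q + q') / 2) ^ 2 := by
    linarith [four_mul_le_sq_add (p + q) (p' + q')]
  have h₃ : (p + q') * (p' + q) ≤ ((p + p' + q + q') / 2) ^ 2 := by
    linarith [four_mul_le_sq_add (p + q') (p' + q)]
  calc _ ≤ sA * ((p + p' + q + q') / 2) ^ 2 + sB * ((p + p' + q + q') / 2) ^ 2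
        + sC * ((p + p' + q + q') / 2) ^ 2 := by gcongr
    _ = _ := by ring

section MixBlowup

variable {m : ℕ} (G : Finset (Finset (Fin m))) (v₁ v₂ : Fin m) (A B C : Finset (Fin m))

def foldClones (y : Fin m ⊕ Fin 2 → ℝ) : Fin m → ℝ :=
  y ∘ Sum.inl + Pi.single v₁ (y (Sum.inr 0)) + Pi.single v₂ (y (Sum.inr 1))

def cloneEdges : Finset (Finset (Fin m ⊕ Fin 2)) :=
  (pairFree G v₁ v₂).image (image Sum.inl)
  ∪ ((pairLink G v₁ v₂).image (image Sum.inl)).image (insert (Sum.inr 0))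
  ∪ ((pairLink G v₂ v₁).image (image Sum.inl)).image (insert (Sum.inr 1))

def mixEdges : Finset (Finset (Fin m ⊕ Fin 2)) :=
  cone Sum.inl A (bipartitePairs (Sum.inl v₁) (Sum.inr 0) (Sum.inl v₂) (Sum.inr 1))
  ∪ cone Sum.inl B (bipartitePairs (Sum.inl v₁) (Sum.inl v₂) (Sum.inr 0) (Sum.inr 1))
  ∪ cone Sum.inl C (bipartitePairs (Sum.inl v₁) (Sum.inr 1) (Sum.inr 0) (Sum.inl v₂))

lemma mixBlowup_eq_union : mixBlowup G v₁ v₂ A B C = cloneEdges G v₁ v₂ ∪ mixEdges v₁ v₂ A B C := by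
  simp only [mixBlowup, cloneEdges, mixEdges, cone, bipartitePairs, pairFree, pairLink,
    image_image, image_insert, image_singleton, union_assoc]
  rw [pair_comm (Sum.inr 1 : Fin m ⊕ Fin 2) (Sum.inr 0), pair_comm (Sum.inr 1) (Sum.inl v₂)]
  rfl

variable {v₁ v₂}

lemma foldClones_apply_of_ne (y : Fin m ⊕ Fin 2 → ℝ) {i : Fin m} (h₁ : i ≠ v₁) (h₂ : i ≠ v₂) :
    foldClones v₁ v₂ y i = y (Sum.inl i) := by
  simp [foldClones, h₁, h₂]

lemma foldClones_apply_left (hne : v₁ ≠ v₂) (y : Fin m ⊕ Fin 2 → ℝ) :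
    foldClones v₁ v₂ y v₁ = y (Sum.inl v₁) + y (Sum.inr 0) := by
  simp [foldClones, hne]

lemma foldClones_apply_right (hne : v₁ ≠ v₂) (y : Fin m ⊕ Fin 2 → ℝ) :
    foldClones v₁ v₂ y v₂ = y (Sum.inl v₂) + y (Sum.inr 1) := by
  simp [foldClones, hne.symm]

lemma sum_foldClones (y : Fin m ⊕ Fin 2 → ℝ) : ∑ i, foldClones v₁ v₂ y i = ∑ j, y j := by
  simp [foldClones, sum_add_distrib, Fintype.sum_sum_type, Fin.sum_univ_two, add_assoc]

lemma mem_stdSimplex_iff_of_eqOn_inl (hne : v₁ ≠ v₂) {x : Fin m → ℝ}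
    {y : Fin m ⊕ Fin 2 → ℝ} (hx : ∀ i, 0 ≤ x i) (hy : ∀ j, 0 ≤ y j)
    (hoff : ∀ i, i ≠ v₁ → i ≠ v₂ → x i = y (Sum.inl i))
    (hsum : x v₁ + x v₂ = y (Sum.inl v₁) + y (Sum.inr 0) + y (Sum.inl v₂) + y (Sum.inr 1)) :
    x ∈ stdSimplex ℝ (Fin m) ↔ y ∈ stdSimplex ℝ (Fin m ⊕ Fin 2) := by
  have hxy : ∑ i, x i = ∑ j, y j := by
    rw [← sum_foldClones (v₁ := v₁) (v₂ := v₂)]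
    refine sum_eq_sum_of_eqOn_of_add_eq hne
      (fun i h₁ h₂ => (hoff i h₁ h₂).trans (foldClones_apply_of_ne y h₁ h₂).symm) ?_
    rw [foldClones_apply_left hne, foldClones_apply_right hne, hsum]
    ring
  simp only [stdSimplex, Set.mem_ofPred_eq, hx, hy, hxy, implies_true, true_and]

end MixBlowup

section MixBlowupLagrangian

variable {m : ℕ} {G : Finset (Finset (Fin m))} {v₁ v₂ : Fin m} {A B C : Finset (Fin m)}

lemma lagPoly_cloneEdges (hne : v₁ ≠ v₂) (y : Fin m ⊕ Fin 2 → ℝ) :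
    lagPoly (cloneEdges G v₁ v₂) y = lagPoly (pairFree G v₁ v₂) (foldClones v₁ v₂ y) := by
  have hinr : ∀ (c : Fin 2) (S : Finset (Fin m)), (Sum.inr c : Fin m ⊕ Fin 2) ∉ S.image Sum.inl :=
    by simp
  have hoff : ∀ i, i ≠ v₁ → i ≠ v₂ → (y ∘ Sum.inl) i = foldClones v₁ v₂ y i :=
    fun i h₁ h₂ => (foldClones_apply_of_ne y h₁ h₂).symm
  rw [cloneEdges, lagPoly_union ?inr₁, lagPoly_union ?inr₀,
    lagPoly_image_image Sum.inl_injective, lagPoly_image_insert (by simp),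
    lagPoly_image_image Sum.inl_injective, lagPoly_image_insert (by simp),
    lagPoly_image_image Sum.inl_injective, lagPoly_pairFree, lagPoly_pairFree_of_eqOn hoff,
    foldClones_apply_left hne, foldClones_apply_right hne]
  · simp only [Function.comp_apply]
    ring
  case inr₀ =>
    simp only [disjoint_left, mem_image]
    rintro _ ⟨E, -, rfl⟩ ⟨_, ⟨S, -, rfl⟩, hSE⟩
    exact hinr 0 E (hSE ▸ mem_insert_self _ _)
  case inr₁ =>
    simp only [disjoint_left, mem_union, mem_image]
    rintro _ (⟨E, -, rfl⟩ | ⟨_, ⟨S, -, rfl⟩, rfl⟩) ⟨_, ⟨S', -, rfl⟩, hSE⟩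
    · exact hinr 1 E (hSE ▸ mem_insert_self _ _)
    · have := hSE ▸ mem_insert_self (Sum.inr 1) (S'.image Sum.inl)
      simp at this

lemma lagPoly_mixEdges (hne : v₁ ≠ v₂) (hAB : Disjoint A B) (hAC : Disjoint A C)
    (hBC : Disjoint B C) (h₁ : v₁ ∉ A ∪ B ∪ C) (h₂ : v₂ ∉ A ∪ B ∪ C) (y : Fin m ⊕ Fin 2 → ℝ) :
    lagPoly (mixEdges v₁ v₂ A B C) y
      = (∑ w ∈ A, y (Sum.inl w))
          * ((y (Sum.inl v₁) + y (Sum.inr 0)) * (y (Sum.inl v₂) + y (Sum.inr 1)))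
      + (∑ w ∈ B, y (Sum.inl w))
          * ((y (Sum.inl v₁) + y (Sum.inl v₂)) * (y (Sum.inr 0) + y (Sum.inr 1)))
      + (∑ w ∈ C, y (Sum.inl w))
          * ((y (Sum.inl v₁) + y (Sum.inr 1)) * (y (Sum.inr 0) + y (Sum.inl v₂))) := by
  have hv : ∀ w ∈ A ∪ B ∪ C, w ≠ v₁ ∧ w ≠ v₂ := fun w hw =>
    ⟨ne_of_mem_of_not_mem hw h₁, ne_of_mem_of_not_mem hw h₂⟩
  have hA : ∀ w ∈ A, w ≠ v₁ ∧ w ≠ v₂ := fun w hw => hv w (by simp [hw])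
  have hB : ∀ w ∈ B, w ≠ v₁ ∧ w ≠ v₂ := fun w hw => hv w (by simp [hw])
  have hC : ∀ w ∈ C, w ≠ v₁ ∧ w ≠ v₂ := fun w hw => hv w (by simp [hw])
  rw [mixEdges, lagPoly_union, lagPoly_union,
    lagPoly_cone Sum.inl_injective fun w hw _ => notMem_of_mem_bipartitePairs (by simp [hA w hw]),
    lagPoly_cone Sum.inl_injective fun w hw _ => notMem_of_mem_bipartitePairs (by simp [hB w hw]),
    lagPoly_cone Sum.inl_injective fun w hw _ => notMem_of_mem_bipartitePairs (by simp [hC w hw]),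
    lagPoly_bipartitePairs (by simp) (by simp) (by simp [hne]) (by simp),
    lagPoly_bipartitePairs (by simp [hne]) (by simp) (by simp) (by simp),
    lagPoly_bipartitePairs (by simp) (by simp) (by simp [hne]) (by simp)]
  · exact disjoint_cone Sum.inl_injective hAB
      fun w hw _ => notMem_of_mem_bipartitePairs (by simp [hA w hw])
  · refine disjoint_union_left.2 ⟨?_, ?_⟩
    · exact disjoint_cone Sum.inl_injective hAC
        fun w hw _ => notMem_of_mem_bipartitePairs (by simp [hA w hw])
    · exact disjoint_cone Sum.inl_injective hBC
        fun w hw _ => notMem_of_mem_bipartitePairs (by simp [hB w hw])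

lemma disjoint_cloneEdges_mixEdges (hne : v₁ ≠ v₂) :
    Disjoint (cloneEdges G v₁ v₂) (mixEdges v₁ v₂ A B C) := by
  set Z : Finset (Fin m ⊕ Fin 2) := {Sum.inl v₁, Sum.inl v₂, Sum.inr 0, Sum.inr 1}
  have hclone : ∀ e ∈ cloneEdges G v₁ v₂, (e ∩ Z).card ≤ 1 := by
    simp only [cloneEdges, mem_union, mem_image]
    rintro _ ((⟨E, hE, rfl⟩ | ⟨_, ⟨S, hS, rfl⟩, rfl⟩) | ⟨_, ⟨S, hS, rfl⟩, rfl⟩) <;>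
      refine card_le_one.2 fun a ha b hb => ?_ <;> simp [Z] at ha hb
    · simp only [pairFree, mem_filter] at hE
      aesop
    · have := notMem_of_mem_pairLink hS
      aesop
    · have := notMem_of_mem_pairLink hS
      aesop
  have hmix : ∀ e ∈ mixEdges v₁ v₂ A B C, 1 < (e ∩ Z).card := by
    simp only [mixEdges, mem_union]
    rintro e ((he | he) | he)
    · exact one_lt_card_inter_of_mem_cone_bipartitePairs (by simp [Z, insert_subset_iff])
        (by simp [hne]) (by simp) he
    · exact one_lt_card_inter_of_mem_cone_bipartitePairs subset_rfl (by simp) (by simp) he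
    · exact one_lt_card_inter_of_mem_cone_bipartitePairs (by simp [Z, insert_subset_iff])
        (by simp [hne]) (by simp) he
  exact disjoint_left.2 fun e h h' => (hmix e h').not_ge (hclone e h)

lemma lagPoly_mixBlowup (hne : v₁ ≠ v₂) (y : Fin m ⊕ Fin 2 → ℝ) :
    lagPoly (mixBlowup G v₁ v₂ A B C) y
      = lagPoly (pairFree G v₁ v₂) (foldClones v₁ v₂ y) + lagPoly (mixEdges v₁ v₂ A B C) y := by
  rw [mixBlowup_eq_union, lagPoly_union (disjoint_cloneEdges_mixEdges hne),
    lagPoly_cloneEdges hne]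

lemma lagPoly_mixBlowup_sub_lagPoly (hG3 : ∀ E ∈ G, E.card = 3) (hne : v₁ ≠ v₂)
    (hsym : ∀ S : Finset (Fin m), v₁ ∉ S → v₂ ∉ S → (insert v₁ S ∈ G ↔ insert v₂ S ∈ G))
    (hunion : A ∪ B ∪ C = coNbhd G v₁ v₂) {x : Fin m → ℝ} {y : Fin m ⊕ Fin 2 → ℝ}
    (hoff : ∀ i, i ≠ v₁ → i ≠ v₂ → x i = y (Sum.inl i))
    (hsum : x v₁ + x v₂ = y (Sum.inl v₁) + y (Sum.inr 0) + y (Sum.inl v₂) + y (Sum.inr 1)) :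
    lagPoly (mixBlowup G v₁ v₂ A B C) y - lagPoly G x
      = lagPoly (mixEdges v₁ v₂ A B C) y - x v₁ * x v₂ * ∑ w ∈ A ∪ B ∪ C, y (Sum.inl w) := by
  have hoff' : ∀ i, i ≠ v₁ → i ≠ v₂ → x i = foldClones v₁ v₂ y i := fun i h₁ h₂ =>
    (hoff i h₁ h₂).trans (foldClones_apply_of_ne y h₁ h₂).symm
  have hsum' : x v₁ + x v₂ = foldClones v₁ v₂ y v₁ + foldClones v₁ v₂ y v₂ := by
    rw [foldClones_apply_left hne, foldClones_apply_right hne, hsum]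
    ring
  have hcoNbhd : ∑ u ∈ coNbhd G v₁ v₂, x u = ∑ w ∈ A ∪ B ∪ C, y (Sum.inl w) := by
    rw [hunion]
    exact sum_congr rfl fun w hw => hoff w (ne_of_mem_of_not_mem hw (notMem_coNbhd_left hG3))
      (ne_of_mem_of_not_mem hw (notMem_coNbhd_right hG3))
  rw [lagPoly_mixBlowup hne, lagPoly_eq_lagPoly_pairFree_add hG3 hne,
    lagPoly_pairFree_eq_of_add_eq hne hsym hoff' hsum', hcoNbhd]
  ring

lemma exists_lagPoly_ge_lagPoly_mixBlowup (hG3 : ∀ E ∈ G, E.card = 3) (hne : v₁ ≠ v₂)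
    (hsym : ∀ S : Finset (Fin m), v₁ ∉ S → v₂ ∉ S → (insert v₁ S ∈ G ↔ insert v₂ S ∈ G))
    (hAB : Disjoint A B) (hAC : Disjoint A C) (hBC : Disjoint B C)
    (hunion : A ∪ B ∪ C = coNbhd G v₁ v₂) {y : Fin m ⊕ Fin 2 → ℝ}
    (hy : y ∈ stdSimplex ℝ (Fin m ⊕ Fin 2)) :
    ∃ x ∈ stdSimplex ℝ (Fin m), lagPoly (mixBlowup G v₁ v₂ A B C) y ≤ lagPoly G x := by
  set t := (y (Sum.inl v₁) + y (Sum.inr 0) + y (Sum.inl v₂) + y (Sum.inr 1)) / 2 with ht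
  set x := Function.update (Function.update (y ∘ Sum.inl) v₁ t) v₂ t
  have hx₁ : x v₁ = t := by simp [x, hne]
  have hx₂ : x v₂ = t := by simp [x]
  have hoff : ∀ i, i ≠ v₁ → i ≠ v₂ → x i = y (Sum.inl i) := fun i h₁ h₂ => by
    simp [x, h₁, h₂]
  have hsum : x v₁ + x v₂ = y (Sum.inl v₁) + y (Sum.inr 0) + y (Sum.inl v₂) + y (Sum.inr 1) := by
    rw [hx₁, hx₂, ht]
    ring
  have ht0 : 0 ≤ t := by
    rw [ht]
    linarith [hy.1 (Sum.inl v₁), hy.1 (Sum.inr 0), hy.1 (Sum.inl v₂), hy.1 (Sum.inr 1)]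
  have hx0 : ∀ i, 0 ≤ x i := fun i => by
    simp only [x, Function.update_apply]
    split_ifs <;> first | exact ht0 | exact hy.1 _
  refine ⟨x, (mem_stdSimplex_iff_of_eqOn_inl hne hx0 hy.1 hoff hsum).2 hy, sub_nonpos.1 ?_⟩
  have hs : ∀ W : Finset (Fin m), 0 ≤ ∑ w ∈ W, y (Sum.inl w) := fun W =>
    sum_nonneg fun w _ => hy.1 (Sum.inl w)
  have hmix := weighted_pairings_le (p := y (Sum.inl v₁)) (p' := y (Sum.inr 0))
    (q := y (Sum.inl v₂)) (q' := y (Sum.inr 1)) (hs A) (hs B) (hs C)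
  rw [lagPoly_mixBlowup_sub_lagPoly hG3 hne hsym hunion hoff hsum,
    lagPoly_mixEdges hne hAB hAC hBC (hunion ▸ notMem_coNbhd_left hG3)
      (hunion ▸ notMem_coNbhd_right hG3),
    sum_union (disjoint_union_left.2 ⟨hAC, hBC⟩), sum_union hAB, hx₁, hx₂]
  rw [← ht] at hmix
  linarith

lemma exists_lagPoly_mixBlowup_ge_lagPoly (hG3 : ∀ E ∈ G, E.card = 3) (hne : v₁ ≠ v₂)
    (hsym : ∀ S : Finset (Fin m), v₁ ∉ S → v₂ ∉ S → (insert v₁ S ∈ G ↔ insert v₂ S ∈ G))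
    (hAB : Disjoint A B) (hAC : Disjoint A C) (hBC : Disjoint B C)
    (hunion : A ∪ B ∪ C = coNbhd G v₁ v₂) {x : Fin m → ℝ} (hx : x ∈ stdSimplex ℝ (Fin m)) :
    ∃ y ∈ stdSimplex ℝ (Fin m ⊕ Fin 2), lagPoly G x ≤ lagPoly (mixBlowup G v₁ v₂ A B C) y := by
  set t := (x v₁ + x v₂) / 4 with ht
  set y : Fin m ⊕ Fin 2 → ℝ :=
    Sum.elim (Function.update (Function.update x v₁ t) v₂ t) fun _ => t
  have hy₁ : y (Sum.inl v₁) = t := by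
    simp only [y, Sum.elim_inl, Function.update_of_ne hne, Function.update_self]
  have hy₂ : y (Sum.inl v₂) = t := by simp only [y, Sum.elim_inl, Function.update_self]
  have hy' : ∀ c, y (Sum.inr c) = t := fun c => rfl
  have hoff : ∀ i, i ≠ v₁ → i ≠ v₂ → x i = y (Sum.inl i) := fun i h₁ h₂ => by
    simp only [y, Sum.elim_inl, Function.update_of_ne h₁, Function.update_of_ne h₂]
  have hsum : x v₁ + x v₂ = y (Sum.inl v₁) + y (Sum.inr 0) + y (Sum.inl v₂) + y (Sum.inr 1) := by
    rw [hy₁, hy₂, hy', hy', ht]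
    ring
  have ht0 : 0 ≤ t := by
    rw [ht]
    linarith [hx.1 v₁, hx.1 v₂]
  have hy0 : ∀ j, 0 ≤ y j := by
    rintro (i | c)
    · simp only [y, Sum.elim_inl, Function.update_apply]
      split_ifs <;> first | exact ht0 | exact hx.1 i
    · exact ht0
  refine ⟨y, (mem_stdSimplex_iff_of_eqOn_inl hne hx.1 hy0 hoff hsum).1 hx, sub_nonneg.1 ?_⟩
  have hx₁₂ : x v₁ * x v₂ ≤ (t + t) * (t + t) := by
    rw [ht]
    linarith [four_mul_le_sq_add (x v₁) (x v₂)]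
  have := mul_le_mul_of_nonneg_right hx₁₂ (sum_nonneg fun w (_ : w ∈ A ∪ B ∪ C) => hy0 (Sum.inl w))
  rw [lagPoly_mixBlowup_sub_lagPoly hG3 hne hsym hunion hoff hsum,
    lagPoly_mixEdges hne hAB hAC hBC (hunion ▸ notMem_coNbhd_left hG3)
      (hunion ▸ notMem_coNbhd_right hG3), hy₁, hy₂, hy', hy']
  rw [sum_union (disjoint_union_left.2 ⟨hAC, hBC⟩), sum_union hAB] at this ⊢
  linarith

end MixBlowupLagrangian

theorem mixBlowup_lagrangian_general {m : ℕ}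
    (G : Finset (Finset (Fin m))) (hG3 : ∀ E ∈ G, E.card = 3)
    (v₁ v₂ : Fin m) (hne : v₁ ≠ v₂)
    (hsym : ∀ S : Finset (Fin m), v₁ ∉ S → v₂ ∉ S → (insert v₁ S ∈ G ↔ insert v₂ S ∈ G))
    (A B C : Finset (Fin m))
    (hAB : Disjoint A B) (hAC : Disjoint A C) (hBC : Disjoint B C)
    (hunion : A ∪ B ∪ C = coNbhd G v₁ v₂)
    (L L' : ℝ) (hL : IsGreatest (lagValues G) L)
    (hL' : IsGreatest (lagValues (mixBlowup G v₁ v₂ A B C)) L') :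
    L' = L := by
  obtain ⟨⟨x, hx, rfl⟩, hLmax⟩ := hL
  obtain ⟨⟨y, hy, rfl⟩, hL'max⟩ := hL'
  apply le_antisymm
  · obtain ⟨x', hx', hle⟩ :=
      exists_lagPoly_ge_lagPoly_mixBlowup hG3 hne hsym hAB hAC hBC hunion hy
    exact hle.trans (hLmax ⟨x', hx', rfl⟩)
  · obtain ⟨y', hy', hle⟩ :=
      exists_lagPoly_mixBlowup_ge_lagPoly hG3 hne hsym hAB hAC hBC hunion hx
    exact hle.trans (hL'max ⟨y', hy', rfl⟩)

/-- If `{v₁, v₂}` is a symmetric pair in a 3-graph `G` with codegree `k ≥ a + b + 1`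
(`a, b ≥ 1`), then the Lagrangian of the `(a,b)`-mix-crossed blowup of `G` on `{v₁, v₂}`
equals the Lagrangian of `G`. -/
theorem mixBlowup_lagrangian {m : ℕ} (a b : ℕ) (ha : 1 ≤ a) (hb : 1 ≤ b)
    (G : Finset (Finset (Fin m))) (hG3 : ∀ E ∈ G, E.card = 3)
    (v₁ v₂ : Fin m) (hne : v₁ ≠ v₂)
    (hsym : ∀ S : Finset (Fin m), v₁ ∉ S → v₂ ∉ S → (insert v₁ S ∈ G ↔ insert v₂ S ∈ G))
    (A B C : Finset (Fin m))
    (hAB : Disjoint A B) (hAC : Disjoint A C) (hBC : Disjoint B C)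
    (hunion : A ∪ B ∪ C = coNbhd G v₁ v₂)
    (hA : A.card = a) (hB : B.card = b) (hC : C.Nonempty)
    (L L' : ℝ) (hL : IsGreatest (lagValues G) L)
    (hL' : IsGreatest (lagValues (mixBlowup G v₁ v₂ A B C)) L') :
    L' = L :=
  mixBlowup_lagrangian_general G hG3 v₁ v₂ hne hsym A B C hAB hAC hBC hunion L L' hL hL'
end

section
/- A mix-crossed blowup G box_{(a,b)} {v_1, v_2} of a 3-graph G is 2-covered if and only if G is 2-covered. -/
/-!
Every edge of the blowup, read on the old vertices, lies inside an edge of `G` (the new edges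
through `w ∈ N(v₁, v₂)` lie inside `{w, v₁, v₂} ∈ G`), so a 2-covered blowup forces `G` to be
2-covered. Conversely, in a 3-graph an edge through `v₁` and `v₂` is a triple `{w, v₁, v₂}`
with `w ∈ N(v₁, v₂)`: the edges of `G` avoiding such triples survive, and the pairs inside the
triples are re-covered by the new edges. A vertex `w ∈ B` lies in the four edges `{w, vᵢ, vⱼ'}`,
and a vertex `w ∈ C` in `{w, v₁, v₂}` and `{w, v₁', v₂'}`; these cover every pair touching the
clones, except a pair `{u, vᵢ'}` with `u ∉ N(v₁, v₂) ∪ {v₁, v₂}`, which is covered by the clone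
of an edge of `G` through `u` and `vᵢ`: that edge cannot contain both `v₁` and `v₂`.
-/

open Finset

/-- A hypergraph is 2-covered if every pair of distinct vertices lies in a common edge. -/
def TwoCovered {V : Type*} (H : Finset (Finset V)) : Prop :=
  ∀ u v : V, u ≠ v → ∃ E ∈ H, u ∈ E ∧ v ∈ E

def Covers {V : Type*} (H : Finset (Finset V)) (x y : V) : Prop :=
  ∃ E ∈ H, x ∈ E ∧ y ∈ E

theorem Covers.symm {V : Type*} {H : Finset (Finset V)} {x y : V} (h : Covers H x y) :
    Covers H y x :=
  let ⟨E, hE, hx, hy⟩ := h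
  ⟨E, hE, hy, hx⟩

theorem Finset.exists_eq_insert_pair_of_card_eq_three {α : Type*} [DecidableEq α] {E : Finset α}
    {a b : α} (hE : #E = 3) (hab : a ≠ b) (ha : a ∈ E) (hb : b ∈ E) :
    ∃ w, E = {w, a, b} := by
  have hsub : {a, b} ⊆ E := insert_subset ha (singleton_subset_iff.mpr hb)
  obtain ⟨w, hw⟩ : ∃ w, E \ {a, b} = {w} := card_eq_one.mp <| by
    rw [card_sdiff_of_subset hsub, hE, card_pair hab]
  refine ⟨w, ?_⟩
  rw [← sdiff_union_of_subset hsub, hw]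
  rfl

variable {m : ℕ} {G : Finset (Finset (Fin m))} {v₁ v₂ : Fin m} {A B C : Finset (Fin m)}

@[simp]
theorem mem_coNbhd {w : Fin m} : w ∈ coNbhd G v₁ v₂ ↔ {w, v₁, v₂} ∈ G := by
  simp [coNbhd]

theorem exists_mem_coNbhd_of_mem (hG3 : ∀ E ∈ G, #E = 3) (hne : v₁ ≠ v₂) {E : Finset (Fin m)}
    (hE : E ∈ G) (h₁ : v₁ ∈ E) (h₂ : v₂ ∈ E) : ∃ w ∈ coNbhd G v₁ v₂, E = {w, v₁, v₂} := by
  obtain ⟨w, rfl⟩ := exists_eq_insert_pair_of_card_eq_three (hG3 E hE) hne h₁ h₂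
  exact ⟨w, mem_coNbhd.mpr hE, rfl⟩

theorem not_both_mem_of_notMem_coNbhd (hG3 : ∀ E ∈ G, #E = 3) (hne : v₁ ≠ v₂)
    {u : Fin m} (hu₁ : u ≠ v₁) (hu₂ : u ≠ v₂) (hN : u ∉ coNbhd G v₁ v₂) {E : Finset (Fin m)}
    (hE : E ∈ G) (hu : u ∈ E) : ¬(v₁ ∈ E ∧ v₂ ∈ E) := by
  rintro ⟨h₁, h₂⟩
  obtain ⟨w, hw, rfl⟩ := exists_mem_coNbhd_of_mem hG3 hne hE h₁ h₂
  simp only [mem_insert, mem_singleton] at hu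
  rcases hu with rfl | rfl | rfl
  exacts [hN hw, hu₁ rfl, hu₂ rfl]

section Membership

variable {S : Finset (Fin m ⊕ Fin 2)}

theorem image_inl_mem_mixBlowup {E : Finset (Fin m)} (hE : E ∈ G) (h : ¬(v₁ ∈ E ∧ v₂ ∈ E)) :
    E.image Sum.inl ∈ mixBlowup G v₁ v₂ A B C := by
  simp only [mixBlowup, mem_union, mem_image, mem_filter]
  exact Or.inl (Or.inl (Or.inl (Or.inl (Or.inl ⟨E, ⟨hE, h⟩, rfl⟩))))

theorem clone_fst_mem_mixBlowup {E : Finset (Fin m)} (hE : E ∈ G) (h₁ : v₁ ∈ E) (h₂ : v₂ ∉ E) :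
    insert (Sum.inr 0) ((E.erase v₁).image Sum.inl) ∈ mixBlowup G v₁ v₂ A B C := by
  simp only [mixBlowup, mem_union, mem_image, mem_filter]
  exact Or.inl (Or.inl (Or.inl (Or.inl (Or.inr ⟨E, ⟨hE, h₁, h₂⟩, rfl⟩))))

theorem clone_snd_mem_mixBlowup {E : Finset (Fin m)} (hE : E ∈ G) (h₂ : v₂ ∈ E) (h₁ : v₁ ∉ E) :
    insert (Sum.inr 1) ((E.erase v₂).image Sum.inl) ∈ mixBlowup G v₁ v₂ A B C := by
  simp only [mixBlowup, mem_union, mem_image, mem_filter]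
  exact Or.inl (Or.inl (Or.inl (Or.inr ⟨E, ⟨hE, h₂, h₁⟩, rfl⟩)))

theorem mem_mixBlowup_of_mem_A {w : Fin m} (hw : w ∈ A)
    (hS : S ∈ ({{.inl w, .inl v₁, .inl v₂}, {.inl w, .inl v₁, .inr 1},
      {.inl w, .inr 0, .inl v₂}, {.inl w, .inr 0, .inr 1}} : Finset (Finset (Fin m ⊕ Fin 2)))) :
    S ∈ mixBlowup G v₁ v₂ A B C := by
  simp only [mixBlowup, mem_union, mem_biUnion]
  exact Or.inl (Or.inl (Or.inr ⟨w, hw, hS⟩))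

theorem mem_mixBlowup_of_mem_B {w : Fin m} (hw : w ∈ B)
    (hS : S ∈ ({{.inl w, .inl v₁, .inr 0}, {.inl w, .inl v₁, .inr 1},
      {.inl w, .inl v₂, .inr 0}, {.inl w, .inl v₂, .inr 1}} : Finset (Finset (Fin m ⊕ Fin 2)))) :
    S ∈ mixBlowup G v₁ v₂ A B C := by
  simp only [mixBlowup, mem_union, mem_biUnion]
  exact Or.inl (Or.inr ⟨w, hw, hS⟩)

theorem mem_mixBlowup_of_mem_C {w : Fin m} (hw : w ∈ C)
    (hS : S ∈ ({{.inl w, .inl v₁, .inr 0}, {.inl w, .inl v₁, .inl v₂},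
      {.inl w, .inr 0, .inr 1}, {.inl w, .inl v₂, .inr 1}} : Finset (Finset (Fin m ⊕ Fin 2)))) :
    S ∈ mixBlowup G v₁ v₂ A B C := by
  simp only [mixBlowup, mem_union, mem_biUnion]
  exact Or.inr ⟨w, hw, hS⟩

end Membership

theorem exists_inl_subset_of_mem_mixBlowup (hsub : A ∪ B ∪ C ⊆ coNbhd G v₁ v₂)
    {S : Finset (Fin m ⊕ Fin 2)} (hS : S ∈ mixBlowup G v₁ v₂ A B C) :
    ∃ E ∈ G, ∀ u, Sum.inl u ∈ S → u ∈ E := by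
  have hN : ∀ w ∈ A ∪ B ∪ C, {w, v₁, v₂} ∈ G := fun w hw => mem_coNbhd.mp (hsub hw)
  simp only [mixBlowup, mem_union, mem_image, mem_biUnion, mem_filter, mem_insert,
    mem_singleton] at hS
  rcases hS with (((((⟨E, ⟨hE, -⟩, rfl⟩ | ⟨E, ⟨hE, -⟩, rfl⟩) | ⟨E, ⟨hE, -⟩, rfl⟩) |
    ⟨w, hw, (rfl | rfl | rfl | rfl)⟩) | ⟨w, hw, (rfl | rfl | rfl | rfl)⟩) |
    ⟨w, hw, (rfl | rfl | rfl | rfl)⟩)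
  all_goals first
    | exact ⟨E, hE, fun u hu => by simp_all⟩
    | exact ⟨{w, v₁, v₂}, hN w (by simp [hw]), fun u hu => by simp at hu ⊢; tauto⟩

theorem TwoCovered.of_mixBlowup (hsub : A ∪ B ∪ C ⊆ coNbhd G v₁ v₂)
    (h : TwoCovered (mixBlowup G v₁ v₂ A B C)) : TwoCovered G := by
  intro u v huv
  obtain ⟨S, hS, hu, hv⟩ := h (.inl u) (.inl v) (Sum.inl_injective.ne huv)
  obtain ⟨E, hE, hSE⟩ := exists_inl_subset_of_mem_mixBlowup hsub hS
  exact ⟨E, hE, hSE u hu, hSE v hv⟩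

section Covering

variable {wb wc : Fin m}

theorem covers_inl_v₁_inl_v₂ (hwc : wc ∈ C) :
    Covers (mixBlowup G v₁ v₂ A B C) (.inl v₁) (.inl v₂) :=
  ⟨{.inl wc, .inl v₁, .inl v₂}, mem_mixBlowup_of_mem_C hwc (by simp), by simp, by simp⟩

theorem covers_inr_inr (hwc : wc ∈ C) (i j : Fin 2) :
    Covers (mixBlowup G v₁ v₂ A B C) (.inr i) (.inr j) :=
  ⟨{.inl wc, .inr 0, .inr 1}, mem_mixBlowup_of_mem_C hwc (by simp),
    by fin_cases i <;> simp, by fin_cases j <;> simp⟩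

theorem covers_inl_inr_of_mem_B (hwb : wb ∈ B) {u : Fin m} (hu : u = v₁ ∨ u = v₂) (j : Fin 2) :
    Covers (mixBlowup G v₁ v₂ A B C) (.inl u) (.inr j) :=
  ⟨{.inl wb, .inl u, .inr j}, mem_mixBlowup_of_mem_B hwb (by rcases hu with rfl | rfl <;>
    fin_cases j <;> simp), by simp, by simp⟩

theorem covers_inl_inl_of_mem {w x : Fin m} (hw : w ∈ A ∪ B ∪ C) (hx : x = v₁ ∨ x = v₂) :
    Covers (mixBlowup G v₁ v₂ A B C) (.inl w) (.inl x) := by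
  simp only [mem_union] at hw
  rcases hw with (hw | hw) | hw
  · exact ⟨{.inl w, .inl v₁, .inl v₂}, mem_mixBlowup_of_mem_A hw (by simp), by simp,
      by rcases hx with rfl | rfl <;> simp⟩
  · exact ⟨{.inl w, .inl x, .inr 0}, mem_mixBlowup_of_mem_B hw (by rcases hx with rfl | rfl <;>
      simp), by simp, by simp⟩
  · exact ⟨{.inl w, .inl v₁, .inl v₂}, mem_mixBlowup_of_mem_C hw (by simp), by simp,
      by rcases hx with rfl | rfl <;> simp⟩

theorem covers_inl_inr_of_mem {w : Fin m} (hw : w ∈ A ∪ B ∪ C) (j : Fin 2) :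
    Covers (mixBlowup G v₁ v₂ A B C) (.inl w) (.inr j) := by
  simp only [mem_union] at hw
  rcases hw with (hw | hw) | hw
  · exact ⟨{.inl w, .inr 0, .inr 1}, mem_mixBlowup_of_mem_A hw (by simp), by simp,
      by fin_cases j <;> simp⟩
  · exact ⟨{.inl w, .inl v₁, .inr j}, mem_mixBlowup_of_mem_B hw (by fin_cases j <;> simp),
      by simp, by simp⟩
  · exact ⟨{.inl w, .inr 0, .inr 1}, mem_mixBlowup_of_mem_C hw (by simp), by simp,
      by fin_cases j <;> simp⟩

theorem covers_inl_inl_of_mem_edge (hG3 : ∀ E ∈ G, #E = 3) (hne : v₁ ≠ v₂)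
    (hcov : coNbhd G v₁ v₂ ⊆ A ∪ B ∪ C) (hwc : wc ∈ C) {E : Finset (Fin m)} (hE : E ∈ G)
    {u v : Fin m} (huv : u ≠ v) (hu : u ∈ E) (hv : v ∈ E) :
    Covers (mixBlowup G v₁ v₂ A B C) (.inl u) (.inl v) := by
  by_cases h : v₁ ∈ E ∧ v₂ ∈ E
  · obtain ⟨w, hw, rfl⟩ := exists_mem_coNbhd_of_mem hG3 hne hE h.1 h.2
    replace hw := hcov hw
    simp only [mem_insert, mem_singleton] at hu hv
    rcases hu with rfl | rfl | rfl <;> rcases hv with rfl | rfl | rfl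
    all_goals first
      | exact absurd rfl huv
      | exact covers_inl_inl_of_mem hw (by simp)
      | exact (covers_inl_inl_of_mem hw (by simp)).symm
      | exact covers_inl_v₁_inl_v₂ hwc
      | exact (covers_inl_v₁_inl_v₂ hwc).symm
  · exact ⟨_, image_inl_mem_mixBlowup hE h, mem_image_of_mem _ hu, mem_image_of_mem _ hv⟩

theorem covers_inl_inr (hG3 : ∀ E ∈ G, #E = 3) (hne : v₁ ≠ v₂)
    (hcov : coNbhd G v₁ v₂ ⊆ A ∪ B ∪ C) (hwb : wb ∈ B) (hG : TwoCovered G) (u : Fin m)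
    (j : Fin 2) : Covers (mixBlowup G v₁ v₂ A B C) (.inl u) (.inr j) := by
  by_cases hv : u = v₁ ∨ u = v₂
  · exact covers_inl_inr_of_mem_B hwb hv j
  by_cases hN : u ∈ A ∪ B ∪ C
  · exact covers_inl_inr_of_mem hN j
  obtain ⟨hu₁, hu₂⟩ := not_or.mp hv
  have hboth : ∀ E ∈ G, u ∈ E → ¬(v₁ ∈ E ∧ v₂ ∈ E) := fun _ hE hu =>
    not_both_mem_of_notMem_coNbhd hG3 hne hu₁ hu₂ (fun h => hN (hcov h)) hE hu
  fin_cases j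
  · obtain ⟨E, hE, hu, h₁⟩ := hG u v₁ hu₁
    exact ⟨_, clone_fst_mem_mixBlowup hE h₁ fun h₂ => hboth E hE hu ⟨h₁, h₂⟩,
      by simp [hu, hu₁], by simp⟩
  · obtain ⟨E, hE, hu, h₂⟩ := hG u v₂ hu₂
    exact ⟨_, clone_snd_mem_mixBlowup hE h₂ fun h₁ => hboth E hE hu ⟨h₁, h₂⟩,
      by simp [hu, hu₂], by simp⟩

theorem TwoCovered.mixBlowup (hG3 : ∀ E ∈ G, #E = 3) (hne : v₁ ≠ v₂)
    (hcov : coNbhd G v₁ v₂ ⊆ A ∪ B ∪ C) (hwb : wb ∈ B) (hwc : wc ∈ C) (hG : TwoCovered G) :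
    TwoCovered (mixBlowup G v₁ v₂ A B C) := by
  rintro (u | i) (v | j) huv
  · obtain ⟨E, hE, hu, hv⟩ := hG u v fun h => huv (congrArg _ h)
    exact covers_inl_inl_of_mem_edge hG3 hne hcov hwc hE (fun h => huv (congrArg _ h)) hu hv
  · exact covers_inl_inr hG3 hne hcov hwb hG u j
  · exact (covers_inl_inr hG3 hne hcov hwb hG v i).symm
  · exact covers_inr_inr hwc i j

end Covering

theorem mixBlowup_twoCovered_general {m : ℕ} (b : ℕ) (hb : 1 ≤ b)
    (G : Finset (Finset (Fin m))) (hG3 : ∀ E ∈ G, E.card = 3)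
    (v₁ v₂ : Fin m) (hne : v₁ ≠ v₂)
    (A B C : Finset (Fin m))
    (hunion : A ∪ B ∪ C = coNbhd G v₁ v₂)
    (hB : B.card = b) (hC : C.Nonempty) :
    TwoCovered (mixBlowup G v₁ v₂ A B C) ↔ TwoCovered G := by
  obtain ⟨wb, hwb⟩ : B.Nonempty := card_pos.mp (by omega)
  obtain ⟨wc, hwc⟩ := hC
  exact ⟨.of_mixBlowup hunion.le, .mixBlowup hG3 hne hunion.ge hwb hwc⟩

/-- A mix-crossed blowup of a 3-graph `G` is 2-covered if and only if `G` is 2-covered. -/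
theorem mixBlowup_twoCovered {m : ℕ} (a b : ℕ) (ha : 1 ≤ a) (hb : 1 ≤ b)
    (G : Finset (Finset (Fin m))) (hG3 : ∀ E ∈ G, E.card = 3)
    (v₁ v₂ : Fin m) (hne : v₁ ≠ v₂)
    (A B C : Finset (Fin m))
    (hAB : Disjoint A B) (hAC : Disjoint A C) (hBC : Disjoint B C)
    (hunion : A ∪ B ∪ C = coNbhd G v₁ v₂)
    (hA : A.card = a) (hB : B.card = b) (hC : C.Nonempty) :
    TwoCovered (mixBlowup G v₁ v₂ A B C) ↔ TwoCovered G :=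
  mixBlowup_twoCovered_general b hb G hG3 v₁ v₂ hne A B C hunion hB hC
end
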